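/- Fix ρ ∈ 𝒞, P ∈ 𝒫^ρ_d and α ∈ (0,1). Then the order-α M-quantile region R^ρ_α(P) is a convex and compact subset of the C-support C_P. Moreover, if ρ(t) = |t|^r with r ≥ 1, then R^ρ_α(P_{A,b}) = A·R^ρ_α(P) + b for every invertible d×d matrix A and every b ∈ ℝ^d, where P_{A,b} is the pushforward of P under z ↦ Az + b. -/

import Mathlib

open MeasureTheory Set Filter
open scoped RealInnerProductSpace ENNReal

noncomputable section

/-- The class `𝒞` of loss functions: convex, nonnegative, even, vanishing only at `0`. -/
def LossClass (ρ : ℝ → ℝ) : Prop :=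
  ConvexOn ℝ Set.univ ρ ∧ (∀ t, 0 ≤ ρ t) ∧ (∀ t, ρ (-t) = ρ t) ∧ (∀ t, ρ t = 0 ↔ t = 0)

/-- `ψ` is the left-derivative of `ρ`. -/
def IsLeftDeriv (ρ ψ : ℝ → ℝ) : Prop :=
  ∀ x : ℝ, HasDerivWithinAt ρ (ψ x) (Set.Iio x) x

/-- `G^ρ_Q(θ) = E_Q[|ψ₋(Y−θ)|·𝟙[Y ≤ θ]] / E_Q[|ψ₋(Y−θ)|]` (equal to `0` when the
denominator vanishes, by the Lean convention for division by zero). -/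
def Gfun (ψ : ℝ → ℝ) (Q : Measure ℝ) (θ : ℝ) : ℝ :=
  (∫ y, |ψ (y - θ)| * (if y ≤ θ then 1 else 0) ∂Q) / ∫ y, |ψ (y - θ)| ∂Q

/-- The order-`α` M-quantile `θ^ρ_α(Q) = inf{θ : G^ρ_Q(θ) ≥ α}` of a law `Q` on `ℝ`. -/
def MQuant (ψ : ℝ → ℝ) (Q : Measure ℝ) (α : ℝ) : ℝ :=
  sInf {θ : ℝ | α ≤ Gfun ψ Q θ}

/-- The pushforward `P_u` of `P` under `z ↦ u'z`. -/
def dirProj {d : ℕ} (P : Measure (EuclideanSpace ℝ (Fin d)))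
    (u : EuclideanSpace ℝ (Fin d)) : Measure ℝ :=
  P.map (fun z => ⟪u, z⟫)

/-- The order-`α` M-quantile halfspace `H^ρ_{α,u}(P) = {z : u'z ≥ θ^ρ_α(P_u)}`. -/
def MHalf {d : ℕ} (ψ : ℝ → ℝ) (P : Measure (EuclideanSpace ℝ (Fin d))) (α : ℝ)
    (u : EuclideanSpace ℝ (Fin d)) : Set (EuclideanSpace ℝ (Fin d)) :=
  {z | MQuant ψ (dirProj P u) α ≤ ⟪u, z⟫}

/-- The order-`α` M-quantile hyperplane `π^ρ_{α,u}(P) = {z : u'z = θ^ρ_α(P_u)}`. -/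
def MHyp {d : ℕ} (ψ : ℝ → ℝ) (P : Measure (EuclideanSpace ℝ (Fin d))) (α : ℝ)
    (u : EuclideanSpace ℝ (Fin d)) : Set (EuclideanSpace ℝ (Fin d)) :=
  {z | ⟪u, z⟫ = MQuant ψ (dirProj P u) α}

/-- The order-`α` M-quantile region `R^ρ_α(P) = ⋂_{u ∈ S^{d−1}} H^ρ_{α,u}(P)`. -/
def MRegion {d : ℕ} (ψ : ℝ → ℝ) (P : Measure (EuclideanSpace ℝ (Fin d))) (α : ℝ) :
    Set (EuclideanSpace ℝ (Fin d)) :=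
  ⋂ u ∈ {u : EuclideanSpace ℝ (Fin d) | ‖u‖ = 1}, MHalf ψ P α u

/-- The halfspace M-depth `MD^ρ(z,P) = sup{α > 0 : z ∈ R^ρ_α(P)}` (with `sup ∅ = 0`,
which is the Lean convention for `sSup` of the empty set of reals). -/
def MDepth {d : ℕ} (ψ : ℝ → ℝ) (P : Measure (EuclideanSpace ℝ (Fin d)))
    (z : EuclideanSpace ℝ (Fin d)) : ℝ :=
  sSup {α : ℝ | α ∈ Set.Ioo (0 : ℝ) 1 ∧ z ∈ MRegion ψ P α}

/-- The C-support `C_P = {z : P[{y : u'y ≤ u'z}] > 0 for every unit u}`. -/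
def Csupport {d : ℕ} (P : Measure (EuclideanSpace ℝ (Fin d))) :
    Set (EuclideanSpace ℝ (Fin d)) :=
  {z | ∀ u : EuclideanSpace ℝ (Fin d), ‖u‖ = 1 → 0 < P {y | ⟪u, y⟫ ≤ ⟪u, z⟫}}


/-!
The region is an intersection of closed halfspaces, hence closed and convex, and the halfspaces in
the directions `± bᵢ` of an orthonormal basis confine it to a box, so it is compact.

If `P_u` puts no mass on `(-∞, c]`, then `G` vanishes on `(-∞, c]` and stays below `α` on a right
neighbourhood of `c`, so `θ_α(P_u) > c`; this puts the region inside the C-support.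

For `ρ = |·|^r` the left derivative `ψ` is positively homogeneous, so `G`, and with it the
M-quantile, is equivariant under increasing affine maps of `ℝ`. The projection of `P_{A,b}` on `u`
is such an affine image of the projection of `P` on `A' u / ‖A' u‖`, and `u ↦ A' u / ‖A' u‖` is a
bijection of the unit sphere.
-/

open scoped Topology

structure IsScoreFunction (ψ : ℝ → ℝ) : Prop where
  mono : Monotone ψ
  nonpos_zero : ψ 0 ≤ 0
  neg_of_neg : ∀ t < 0, ψ t < 0
  pos_of_pos : ∀ t, 0 < t → 0 < ψ t

namespace IsLeftDeriv

variable {ρ ψ : ℝ → ℝ}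

lemma le_slope (hψ : IsLeftDeriv ρ ψ) (hρ : ConvexOn ℝ univ ρ) {x y : ℝ} (hxy : x < y) :
    ψ x ≤ slope ρ x y := by
  rw [← (hψ x).derivWithin (uniqueDiffWithinAt_Iio x)]
  exact (hρ.leftDeriv_le_rightDeriv_of_mem_interior (by simp)).trans
    (hρ.rightDeriv_le_slope_of_mem_interior (by simp) trivial hxy)

lemma slope_le (hψ : IsLeftDeriv ρ ψ) (hρ : ConvexOn ℝ univ ρ) {x y : ℝ} (hxy : x < y) :
    slope ρ x y ≤ ψ y :=
  hρ.slope_le_of_hasDerivWithinAt_Iio trivial trivial hxy (hψ y)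

lemma nonpos_of_isMinOn (hψ : IsLeftDeriv ρ ψ) {x : ℝ} (hx : IsMinOn ρ univ x) : ψ x ≤ 0 := by
  refine le_of_tendsto ((hasDerivWithinAt_iff_tendsto_slope' self_notMem_Iio).mp (hψ x)) ?_
  filter_upwards [self_mem_nhdsWithin] with w (hw : w < x)
  rw [slope_def_field]
  exact div_nonpos_of_nonneg_of_nonpos (sub_nonneg.2 (hx trivial)) (sub_nonpos.2 hw.le)

end IsLeftDeriv

lemma LossClass.isScoreFunction {ρ ψ : ℝ → ℝ} (hρ : LossClass ρ) (hψ : IsLeftDeriv ρ ψ) :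
    IsScoreFunction ψ := by
  obtain ⟨hconv, hnonneg, -, hzero⟩ := hρ
  have hρ0 : ρ 0 = 0 := (hzero 0).2 rfl
  have hpos : ∀ t ≠ 0, 0 < ρ t := fun t ht => (hnonneg t).lt_of_ne' (mt (hzero t).1 ht)
  refine ⟨fun x y hxy => ?_, hψ.nonpos_of_isMinOn fun t _ => ?_, fun t ht => ?_, fun t ht => ?_⟩
  · rcases hxy.eq_or_lt with rfl | hxy
    · rfl
    · exact (hψ.le_slope hconv hxy).trans (hψ.slope_le hconv hxy)
  · simpa [hρ0] using hnonneg t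
  · refine (hψ.le_slope hconv ht).trans_lt ?_
    rw [slope_def_field, hρ0]
    exact div_neg_of_neg_of_pos (by linarith [hpos t ht.ne]) (by linarith)
  · refine lt_of_lt_of_le ?_ (hψ.slope_le hconv ht)
    rw [slope_def_field, hρ0]
    exact div_pos (by linarith [hpos t ht.ne']) (by linarith)

namespace IsScoreFunction

variable {ψ : ℝ → ℝ} (hψ : IsScoreFunction ψ)
include hψ

lemma abs_le_abs_of_nonpos {a b : ℝ} (hab : a ≤ b) (hb : b ≤ 0) : |ψ b| ≤ |ψ a| := by
  have hψb : ψ b ≤ 0 := (hψ.mono hb).trans hψ.nonpos_zero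
  rw [abs_of_nonpos hψb, abs_of_nonpos ((hψ.mono hab).trans hψb)]
  exact neg_le_neg (hψ.mono hab)

lemma abs_le_abs_of_pos {a b : ℝ} (ha : 0 < a) (hab : a ≤ b) : |ψ a| ≤ |ψ b| := by
  rw [abs_of_pos (hψ.pos_of_pos a ha), abs_of_pos (hψ.pos_of_pos b (ha.trans_le hab))]
  exact hψ.mono hab

lemma abs_pos {t : ℝ} (ht : t ≠ 0) : 0 < |ψ t| := by
  rcases ht.lt_or_gt with ht | ht
  · exact abs_pos_of_neg (hψ.neg_of_neg t ht)
  · exact abs_pos_of_pos (hψ.pos_of_pos t ht)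

end IsScoreFunction

lemma Gfun_eq (ψ : ℝ → ℝ) (Q : Measure ℝ) (θ : ℝ) :
    Gfun ψ Q θ = (∫ y in Iic θ, |ψ (y - θ)| ∂Q) / ∫ y, |ψ (y - θ)| ∂Q := by
  rw [Gfun, ← integral_indicator measurableSet_Iic]
  congr 1
  refine integral_congr_ae (Eventually.of_forall fun y => ?_)
  by_cases h : y ≤ θ <;> simp [Set.indicator, h]

lemma Gfun_nonneg (ψ : ℝ → ℝ) (Q : Measure ℝ) (θ : ℝ) : 0 ≤ Gfun ψ Q θ := by
  rw [Gfun_eq]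
  exact div_nonneg (integral_nonneg fun _ => abs_nonneg _) (integral_nonneg fun _ => abs_nonneg _)

lemma Gfun_eq_zero_of_measure_Iic {ψ : ℝ → ℝ} {Q : Measure ℝ} {θ : ℝ} (h : Q (Iic θ) = 0) :
    Gfun ψ Q θ = 0 := by
  rw [Gfun_eq, Measure.restrict_eq_zero.2 h, integral_zero_measure, zero_div]

section MeasureLimits

variable (Q : Measure ℝ) [IsFiniteMeasure Q]

lemma tendsto_measure_Iic_atBot_zero : Tendsto (fun θ => Q (Iic θ)) atBot (𝓝 0) := by
  have := tendsto_measure_iInter_atBot (μ := Q) (fun _ => measurableSet_Iic.nullMeasurableSet)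
    (fun _ _ h => Iic_subset_Iic.2 h) ⟨0, measure_ne_top Q _⟩
  have hempty : ⋂ θ : ℝ, Iic θ = ∅ :=
    eq_empty_of_forall_notMem fun x hx => (sub_one_lt x).not_ge (mem_iInter.1 hx (x - 1))
  rwa [hempty, measure_empty] at this

lemma tendsto_measure_Ioi_atTop_zero : Tendsto (fun θ => Q (Ioi θ)) atTop (𝓝 0) := by
  have := tendsto_measure_iInter_atTop (μ := Q) (fun _ => measurableSet_Ioi.nullMeasurableSet)
    (fun _ _ h => Ioi_subset_Ioi h) ⟨0, measure_ne_top Q _⟩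
  have hempty : ⋂ θ : ℝ, Ioi θ = ∅ :=
    eq_empty_of_forall_notMem fun x hx => lt_irrefl x (mem_iInter.1 hx x)
  rwa [hempty, measure_empty] at this

lemma tendsto_measure_Iic_nhdsGT (c : ℝ) :
    Tendsto (fun θ => Q (Iic θ)) (𝓝[>] c) (𝓝 (Q (Iic c))) := by
  have := tendsto_measure_biInter_gt (μ := Q) (a := c)
    (fun _ _ => measurableSet_Iic.nullMeasurableSet)
    (fun _ _ _ h => Iic_subset_Iic.2 h) ⟨c + 1, by simp, measure_ne_top Q _⟩
  have hinter : ⋂ r > c, Iic r = Iic c := by ext; simp [forall_gt_imp_ge_iff_le_of_dense]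
  rwa [hinter] at this

end MeasureLimits

section Quantile

variable {ψ : ℝ → ℝ} {Q : Measure ℝ} [IsProbabilityMeasure Q]

lemma eventually_measure_Ioi_pos {l : Filter ℝ} (h : Tendsto (fun θ => Q (Iic θ)) l (𝓝 0)) :
    ∀ᶠ t in l, 0 < Q (Ioi t) := by
  filter_upwards [h.eventually (gt_mem_nhds zero_lt_one)] with t ht
  rw [← compl_Iic, prob_compl_eq_one_sub measurableSet_Iic]
  exact tsub_pos_of_lt ht

variable (hψ : IsScoreFunction ψ) (hint : ∀ θ, Integrable (fun y => |ψ (y - θ)|) Q)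
include hψ hint

/-- For `θ ≤ θ₁` the denominator of `G` is at least `Q.real (Ioi t) * |ψ (t - θ₁)|`, while the
numerator is at most `∫ y in Iic θ, |ψ (y - θ₁)| ∂Q`, which vanishes with `Q (Iic θ)` by absolute
continuity of the integral. -/
lemma tendsto_Gfun_zero {l : Filter ℝ} {θ₁ t : ℝ} (hθ₁t : θ₁ < t) (ht : 0 < Q (Ioi t))
    (hl : ∀ᶠ θ in l, θ ≤ θ₁) (hQl : Tendsto (fun θ => Q (Iic θ)) l (𝓝 0)) :
    Tendsto (Gfun ψ Q) l (𝓝 0) := by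
  set m := Q.real (Ioi t) * |ψ (t - θ₁)|
  have hm : 0 < m :=
    mul_pos (ENNReal.toReal_pos ht.ne' (measure_ne_top Q _)) (hψ.abs_pos (sub_ne_zero.2 hθ₁t.ne'))
  have hden : ∀ θ ≤ θ₁, m ≤ ∫ y, |ψ (y - θ)| ∂Q := fun θ hθ =>
    (setIntegral_ge_of_const_le measurableSet_Ioi (measure_ne_top Q _)
      (fun y (hy : t < y) => hψ.abs_le_abs_of_pos (by linarith) (by linarith))
      (hint θ).integrableOn).trans
      (setIntegral_le_integral (hint θ) (ae_of_all _ fun _ => abs_nonneg _))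
  have hnum : ∀ θ ≤ θ₁, ∫ y in Iic θ, |ψ (y - θ)| ∂Q ≤ ∫ y in Iic θ, |ψ (y - θ₁)| ∂Q :=
    fun θ hθ => setIntegral_mono_on (hint θ).integrableOn (hint θ₁).integrableOn measurableSet_Iic
      fun y (hy : y ≤ θ) => hψ.abs_le_abs_of_nonpos (by linarith) (by linarith)
  have htail : Tendsto (fun θ => (∫ y in Iic θ, |ψ (y - θ₁)| ∂Q) / m) l (𝓝 0) := by
    simpa using ((hint θ₁).tendsto_setIntegral_nhds_zero hQl).div_const m
  refine squeeze_zero' (Eventually.of_forall (Gfun_nonneg ψ Q)) ?_ htail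
  filter_upwards [hl] with θ hθ
  rw [Gfun_eq]
  calc _ ≤ (∫ y in Iic θ, |ψ (y - θ)| ∂Q) / m :=
        div_le_div_of_nonneg_left (setIntegral_nonneg measurableSet_Iic fun _ _ => abs_nonneg _)
          hm (hden θ hθ)
    _ ≤ _ := div_le_div_of_nonneg_right (hnum θ hθ) hm.le

lemma tendsto_Gfun_atTop : Tendsto (Gfun ψ Q) atTop (𝓝 1) := by
  obtain ⟨s, hs⟩ : ∃ s, 0 < Q (Iic s) :=
    ((tendsto_measure_Iic_atTop Q).eventually (lt_mem_nhds (by simp))).exists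
  set θ₀ := s + 1
  set m := Q.real (Iic s) * |ψ (-1)|
  have hm : 0 < m :=
    mul_pos (ENNReal.toReal_pos hs.ne' (measure_ne_top Q _)) (hψ.abs_pos (by norm_num))
  have hnum : ∀ θ ≥ θ₀, m ≤ ∫ y in Iic θ, |ψ (y - θ)| ∂Q := fun θ hθ =>
    (setIntegral_ge_of_const_le measurableSet_Iic (measure_ne_top Q _)
      (fun y (hy : y ≤ s) => hψ.abs_le_abs_of_nonpos (by linarith) (by norm_num))
      (hint θ).integrableOn).trans
      (setIntegral_mono_set (hint θ).integrableOn (ae_of_all _ fun _ => abs_nonneg _)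
        (Iic_subset_Iic.2 (by linarith)).eventuallyLE)
  have hrem : ∀ θ ≥ θ₀, ∫ y in Ioi θ, |ψ (y - θ)| ∂Q ≤ ∫ y in Ioi θ, |ψ (y - θ₀)| ∂Q :=
    fun θ hθ => setIntegral_mono_on (hint θ).integrableOn (hint θ₀).integrableOn measurableSet_Ioi
      fun y (hy : θ < y) => hψ.abs_le_abs_of_pos (by linarith) (by linarith)
  have htail : Tendsto (fun θ => (∫ y in Ioi θ, |ψ (y - θ₀)| ∂Q) / m) atTop (𝓝 0) := by
    simpa using
      ((hint θ₀).tendsto_setIntegral_nhds_zero (tendsto_measure_Ioi_atTop_zero Q)).div_const m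
  suffices h : Tendsto (fun θ => 1 - Gfun ψ Q θ) atTop (𝓝 0) by
    simpa using (tendsto_const_nhds (x := (1 : ℝ))).sub h
  refine squeeze_zero' (Eventually.of_forall fun θ => ?_) ?_ htail
  · rw [sub_nonneg, Gfun_eq]
    exact div_le_one_of_le₀ (setIntegral_le_integral (hint θ) (ae_of_all _ fun _ => abs_nonneg _))
      (integral_nonneg fun _ => abs_nonneg _)
  filter_upwards [eventually_ge_atTop θ₀] with θ hθ
  have hsplit := integral_add_compl (measurableSet_Iic (a := θ)) (hint θ)
  rw [compl_Iic] at hsplit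
  have hR : 0 ≤ ∫ y in Ioi θ, |ψ (y - θ)| ∂Q :=
    setIntegral_nonneg measurableSet_Ioi fun _ _ => abs_nonneg _
  have hN := hnum θ hθ
  rw [Gfun_eq, ← hsplit, one_sub_div (by linarith), add_sub_cancel_left]
  calc _ ≤ (∫ y in Ioi θ, |ψ (y - θ)| ∂Q) / m := div_le_div_of_nonneg_left hR hm (by linarith)
    _ ≤ _ := div_le_div_of_nonneg_right (hrem θ hθ) hm.le

lemma nonempty_Gfun_ge {α : ℝ} (hα : α < 1) : {θ | α ≤ Gfun ψ Q θ}.Nonempty :=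
  (((tendsto_Gfun_atTop hψ hint).eventually (lt_mem_nhds hα)).exists).imp fun _ => le_of_lt

lemma bddBelow_Gfun_ge {α : ℝ} (hα : 0 < α) : BddBelow {θ | α ≤ Gfun ψ Q θ} := by
  have hQ := tendsto_measure_Iic_atBot_zero Q
  obtain ⟨t, ht⟩ := (eventually_measure_Ioi_pos hQ).exists
  obtain ⟨a, ha⟩ := eventually_atBot.1 <| (tendsto_Gfun_zero hψ hint (sub_one_lt t) ht
    (eventually_le_atBot _) hQ).eventually (gt_mem_nhds hα)
  exact ⟨a, fun θ hθ => le_of_not_gt fun h => (ha θ h.le).not_ge hθ⟩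

lemma lt_MQuant_of_measure_Iic_eq_zero {α c : ℝ} (hα : α ∈ Ioo (0 : ℝ) 1) (hc : Q (Iic c) = 0) :
    c < MQuant ψ Q α := by
  have hQ : Tendsto (fun θ => Q (Iic θ)) (𝓝[>] c) (𝓝 0) := hc ▸ tendsto_measure_Iic_nhdsGT Q c
  obtain ⟨t, ht, hct⟩ := ((eventually_measure_Ioi_pos hQ).and self_mem_nhdsWithin).exists
  have hl : ∀ᶠ θ in 𝓝[>] c, θ ≤ (c + t) / 2 :=
    nhdsWithin_le_nhds (Iic_mem_nhds (by linarith [hct]))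
  obtain ⟨u, hcu, hu⟩ := mem_nhdsGT_iff_exists_Ioo_subset.1 <|
    (tendsto_Gfun_zero hψ hint (by linarith [hct]) ht hl hQ).eventually (gt_mem_nhds hα.1)
  refine hcu.trans_le (le_csInf (nonempty_Gfun_ge hψ hint hα.2) fun θ hθ => ?_)
  by_contra! hθu
  rcases le_or_gt θ c with hθc | hcθ
  · have : α ≤ 0 := (Gfun_eq_zero_of_measure_Iic (measure_mono_null (Iic_subset_Iic.2 hθc) hc)) ▸ hθ
    linarith [hα.1]
  · exact (hu ⟨hcθ, hθu⟩ : Gfun ψ Q θ < α).not_ge hθ.out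

end Quantile

lemma IsLeftDeriv.apply_mul_of_homogeneous {ρ ψ : ℝ → ℝ} (hψ : IsLeftDeriv ρ ψ) {r s : ℝ}
    (hs : 0 < s) (hρ : ∀ t, ρ (s * t) = s ^ r * ρ t) (x : ℝ) :
    ψ (s * x) = s ^ (r - 1) * ψ x := by
  have hcomp : HasDerivWithinAt (fun t => ρ (s * t)) (ψ (s * x) * s) (Iio x) x :=
    (hψ (s * x)).comp x ((hasDerivAt_id x).const_mul s).hasDerivWithinAt
      (fun t (ht : t < x) => (mul_lt_mul_iff_right₀ hs).2 ht) |>.congr_deriv (by simp)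
  have hscaled : HasDerivWithinAt (fun t => ρ (s * t)) (s ^ r * ψ x) (Iio x) x := by
    simpa only [hρ] using (hψ x).const_mul (s ^ r)
  have := (uniqueDiffWithinAt_Iio x).eq_deriv _ hcomp hscaled
  rw [Real.rpow_sub_one hs.ne']
  field_simp
  linarith

lemma Gfun_map_affine {ψ : ℝ → ℝ} {p s : ℝ} (hs : 0 < s) (hψ : ∀ t, ψ (s * t) = s ^ p * ψ t)
    (m : ℝ) (Q : Measure ℝ) (θ : ℝ) :
    Gfun ψ (Q.map (fun t => s * t + m)) (s * θ + m) = Gfun ψ Q θ := by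
  have hf : MeasurableEmbedding (fun t : ℝ => s * t + m) :=
    ((Homeomorph.mulLeft₀ s hs.ne').trans (Homeomorph.addRight m)).measurableEmbedding
  have hsp : 0 < s ^ p := Real.rpow_pos_of_pos hs p
  have hw : ∀ y, |ψ (s * y + m - (s * θ + m))| = s ^ p * |ψ (y - θ)| := fun y => by
    rw [show s * y + m - (s * θ + m) = s * (y - θ) by ring, hψ, abs_mul, abs_of_pos hsp]
  have hle : ∀ y, s * y + m ≤ s * θ + m ↔ y ≤ θ := fun y => by
    rw [add_le_add_iff_right, mul_le_mul_iff_right₀ hs]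
  simp only [Gfun, hf.integral_map, hw, hle, mul_assoc, integral_const_mul]
  exact mul_div_mul_left _ _ hsp.ne'

lemma MQuant_map_affine {ψ : ℝ → ℝ} {p s : ℝ} (hs : 0 < s) (hψ : ∀ t, ψ (s * t) = s ^ p * ψ t)
    (m : ℝ) {Q : Measure ℝ} {α : ℝ} (hne : {θ | α ≤ Gfun ψ Q θ}.Nonempty)
    (hbdd : BddBelow {θ | α ≤ Gfun ψ Q θ}) :
    MQuant ψ (Q.map (fun t => s * t + m)) α = s * MQuant ψ Q α + m := by
  set f := fun t : ℝ => s * t + m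
  have hpre : f ⁻¹' {θ | α ≤ Gfun ψ (Q.map f) θ} = {θ | α ≤ Gfun ψ Q θ} := by
    ext θ
    simp [f, Gfun_map_affine hs hψ]
  have hsurj : Function.Surjective f := fun y => ⟨(y - m) / s, by simp only [f]; field_simp; ring⟩
  have hmono : Monotone f := fun a b h => by simp only [f]; gcongr
  rw [MQuant, MQuant, ← image_preimage_eq {θ | α ≤ Gfun ψ (Q.map f) θ} hsurj, hpre]
  exact (hmono.map_csInf_of_continuousAt (by fun_prop) hne hbdd).symm

section Halfspaces

variable {E : Type*} [NormedAddCommGroup E] [InnerProductSpace ℝ E]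

lemma convex_iInter_halfspaces (q : E → ℝ) :
    Convex ℝ (⋂ u ∈ {u : E | ‖u‖ = 1}, {z | q u ≤ ⟪u, z⟫}) :=
  convex_iInter₂ fun u _ => convex_halfSpace_ge (innerSL ℝ u).toLinearMap.isLinear (q u)

lemma isCompact_iInter_halfspaces [FiniteDimensional ℝ E] (q : E → ℝ) :
    IsCompact (⋂ u ∈ {u : E | ‖u‖ = 1}, {z | q u ≤ ⟪u, z⟫}) := by
  refine Metric.isCompact_of_isClosed_isBounded
    (isClosed_biInter fun u _ => isClosed_le continuous_const (innerSL ℝ u).continuous) ?_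
  set b := stdOrthonormalBasis ℝ E
  refine isBounded_iff_forall_norm_le.2 ⟨∑ i, (|q (b i)| + |q (-b i)|), fun z hz => ?_⟩
  have hunit : ∀ i, ‖b i‖ = 1 := b.orthonormal.1
  have hcoord : ∀ i, |⟪b i, z⟫| ≤ |q (b i)| + |q (-b i)| := fun i => by
    have h₁ : q (b i) ≤ ⟪b i, z⟫ := mem_iInter₂.1 hz (b i) (hunit i)
    have h₂ : q (-b i) ≤ -⟪b i, z⟫ := by
      simpa [inner_neg_left] using mem_iInter₂.1 hz (-b i) (by simp [hunit i])
    rw [abs_le]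
    constructor <;> linarith [neg_abs_le (q (b i)), neg_abs_le (q (-b i)),
      abs_nonneg (q (b i)), abs_nonneg (q (-b i))]
  calc ‖z‖ = ‖∑ i, ⟪b i, z⟫ • b i‖ := by rw [b.sum_repr']
    _ ≤ ∑ i, ‖⟪b i, z⟫ • b i‖ := norm_sum_le _ _
    _ = ∑ i, |⟪b i, z⟫| := by simp [norm_smul, hunit]
    _ ≤ _ := Finset.sum_le_sum fun i _ => hcoord i

end Halfspaces

lemma exists_norm_eq_one_inv_norm_smul_eq {E F : Type*} [NormedAddCommGroup E] [NormedSpace ℝ E]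
    [NormedAddCommGroup F] [NormedSpace ℝ F] (L : E ≃L[ℝ] F) {v : F} (hv : ‖v‖ = 1) :
    ∃ u : E, ‖u‖ = 1 ∧ ‖L u‖⁻¹ • L u = v := by
  have hw : L.symm v ≠ 0 := L.symm.map_ne_zero_iff.2 (ne_zero_of_norm_ne_zero (by simp [hv]))
  refine ⟨‖L.symm v‖⁻¹ • L.symm v, norm_smul_inv_norm (𝕜 := ℝ) hw, ?_⟩
  simp [norm_smul, hv, smul_smul, hw]

section Adjoint

variable {E F : Type*} [NormedAddCommGroup E] [InnerProductSpace ℝ E] [CompleteSpace E]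
  [NormedAddCommGroup F] [InnerProductSpace ℝ F] [CompleteSpace F]

def adjointEquiv (A : E ≃L[ℝ] F) : F ≃L[ℝ] E :=
  .equivOfInverse (ContinuousLinearMap.adjoint (A : E →L[ℝ] F))
    (ContinuousLinearMap.adjoint (A.symm : F →L[ℝ] E))
    (fun x => ext_inner_right ℝ fun y => by simp [ContinuousLinearMap.adjoint_inner_left])
    (fun x => ext_inner_right ℝ fun y => by simp [ContinuousLinearMap.adjoint_inner_left])

lemma inner_add_eq_of_adjoint_eq_smul {A : E →L[ℝ] F} {u : F} {v : E} {s : ℝ}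
    (h : ContinuousLinearMap.adjoint A u = s • v) (b : F) (z : E) :
    ⟪u, A z + b⟫ = s * ⟪v, z⟫ + ⟪u, b⟫ := by
  rw [inner_add_right, ← ContinuousLinearMap.adjoint_inner_left, h, real_inner_smul_left]

end Adjoint

section Region

variable {d : ℕ}

instance isProbabilityMeasure_dirProj (P : Measure (EuclideanSpace ℝ (Fin d)))
    [IsProbabilityMeasure P] (u : EuclideanSpace ℝ (Fin d)) :
    IsProbabilityMeasure (dirProj P u) :=
  Measure.isProbabilityMeasure_map (innerSL ℝ u).continuous.aemeasurable

lemma dirProj_map_affine (P : Measure (EuclideanSpace ℝ (Fin d)))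
    {A : EuclideanSpace ℝ (Fin d) →L[ℝ] EuclideanSpace ℝ (Fin d)} {u v : EuclideanSpace ℝ (Fin d)}
    {s : ℝ} (h : ContinuousLinearMap.adjoint A u = s • v) (b : EuclideanSpace ℝ (Fin d)) :
    dirProj (P.map fun z => A z + b) u = (dirProj P v).map fun t => s * t + ⟪u, b⟫ := by
  rw [dirProj, dirProj, Measure.map_map (by fun_prop) (by fun_prop),
    Measure.map_map (by fun_prop) (by fun_prop)]
  congr 1
  funext z
  exact inner_add_eq_of_adjoint_eq_smul h b z

lemma mem_MHalf_map_affine {ψ : ℝ → ℝ} {p : ℝ} (hψ : ∀ s, 0 < s → ∀ t, ψ (s * t) = s ^ p * ψ t)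
    (P : Measure (EuclideanSpace ℝ (Fin d))) {α : ℝ}
    {A : EuclideanSpace ℝ (Fin d) →L[ℝ] EuclideanSpace ℝ (Fin d)} {u v : EuclideanSpace ℝ (Fin d)}
    {s : ℝ} (hs : 0 < s) (h : ContinuousLinearMap.adjoint A u = s • v)
    (hne : {θ | α ≤ Gfun ψ (dirProj P v) θ}.Nonempty)
    (hbdd : BddBelow {θ | α ≤ Gfun ψ (dirProj P v) θ}) (b z : EuclideanSpace ℝ (Fin d)) :
    A z + b ∈ MHalf ψ (P.map fun z => A z + b) α u ↔ z ∈ MHalf ψ P α v := by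
  show MQuant ψ _ α ≤ ⟪u, A z + b⟫ ↔ MQuant ψ (dirProj P v) α ≤ ⟪v, z⟫
  rw [dirProj_map_affine P h, MQuant_map_affine hs (hψ s hs) _ hne hbdd,
    inner_add_eq_of_adjoint_eq_smul h, add_le_add_iff_right, mul_le_mul_iff_right₀ hs]

theorem MRegion_map_affine {ψ : ℝ → ℝ} {p : ℝ}
    (hψ : ∀ s, 0 < s → ∀ t, ψ (s * t) = s ^ p * ψ t) {P : Measure (EuclideanSpace ℝ (Fin d))}
    {α : ℝ} (hP : ∀ v : EuclideanSpace ℝ (Fin d), ‖v‖ = 1 →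
      {θ | α ≤ Gfun ψ (dirProj P v) θ}.Nonempty ∧ BddBelow {θ | α ≤ Gfun ψ (dirProj P v) θ})
    (A : EuclideanSpace ℝ (Fin d) ≃L[ℝ] EuclideanSpace ℝ (Fin d)) (b : EuclideanSpace ℝ (Fin d)) :
    MRegion ψ (P.map fun z => A z + b) α = (fun z => A z + b) '' MRegion ψ P α := by
  set L := adjointEquiv A
  have hLu : ∀ u : EuclideanSpace ℝ (Fin d), ‖u‖ = 1 → L u ≠ 0 := fun u hu =>
    L.map_ne_zero_iff.2 (norm_ne_zero_iff.1 (by simp [hu]))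
  have hunit : ∀ u : EuclideanSpace ℝ (Fin d), ‖u‖ = 1 → ‖‖L u‖⁻¹ • L u‖ = 1 := fun u hu =>
    norm_smul_inv_norm (𝕜 := ℝ) (hLu u hu)
  have hhalf : ∀ u, ‖u‖ = 1 → ∀ z, A z + b ∈ MHalf ψ (P.map fun z => A z + b) α u ↔
      z ∈ MHalf ψ P α (‖L u‖⁻¹ • L u) := fun u hu z => by
    refine mem_MHalf_map_affine hψ P (A := A) (norm_pos_iff.2 (hLu u hu)) ?_
      (hP _ (hunit u hu)).1 (hP _ (hunit u hu)).2 b z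
    rw [smul_smul, mul_inv_cancel₀ (norm_ne_zero_iff.2 (hLu u hu)), one_smul]
    rfl
  have hmem : ∀ z, A z + b ∈ MRegion ψ (P.map fun z => A z + b) α ↔ z ∈ MRegion ψ P α := by
    intro z
    simp only [MRegion, mem_iInter₂]
    refine ⟨fun h v hv => ?_, fun h u hu => (hhalf u hu z).2 (h _ (hunit u hu))⟩
    obtain ⟨u, hu, rfl⟩ := exists_norm_eq_one_inv_norm_smul_eq L hv
    exact (hhalf u hu z).1 (h u hu)
  have hinj : Function.Injective fun z => A z + b := fun x y h => A.injective (add_right_cancel h)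
  ext z'
  obtain ⟨z, rfl⟩ : ∃ z, A z + b = z' := ⟨A.symm (z' - b), by simp⟩
  rw [hmem, hinj.mem_set_image]

end Region

theorem stmt_6_general {d : ℕ} (ρ ψ : ℝ → ℝ) (hρ : LossClass ρ)
    (hψ : IsLeftDeriv ρ ψ)
    (P : Measure (EuclideanSpace ℝ (Fin d))) [IsProbabilityMeasure P]
    (hP2 : ∀ u : EuclideanSpace ℝ (Fin d), ‖u‖ = 1 → ∀ θ : ℝ,
      Integrable (fun t => |ψ (t - θ)|) (dirProj P u))
    (α : ℝ) (hα : α ∈ Set.Ioo (0 : ℝ) 1) :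
    Convex ℝ (MRegion ψ P α) ∧ IsCompact (MRegion ψ P α) ∧
    MRegion ψ P α ⊆ Csupport P ∧
    ((∃ r : ℝ, 1 ≤ r ∧ ρ = fun t : ℝ => |t| ^ r) →
      ∀ (A : EuclideanSpace ℝ (Fin d) ≃L[ℝ] EuclideanSpace ℝ (Fin d))
        (b : EuclideanSpace ℝ (Fin d)),
        MRegion ψ (P.map (fun z => A z + b)) α = (fun z => A z + b) '' MRegion ψ P α) := by
  have hscore := hρ.isScoreFunction hψ
  refine ⟨convex_iInter_halfspaces _, isCompact_iInter_halfspaces _, fun z hz u hu => ?_, ?_⟩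
  · refine pos_iff_ne_zero.2 fun hnull => ?_
    have hQ : dirProj P u (Iic ⟪u, z⟫) = 0 := by
      rwa [dirProj, Measure.map_apply (by fun_prop) measurableSet_Iic]
    exact (lt_MQuant_of_measure_Iic_eq_zero hscore (hP2 u hu) hα hQ).not_ge (mem_iInter₂.1 hz u hu)
  · rintro ⟨r, -, rfl⟩ A b
    have hhom : ∀ s, 0 < s → ∀ t, ψ (s * t) = s ^ (r - 1) * ψ t := fun s hs =>
      hψ.apply_mul_of_homogeneous hs fun t => by
        rw [abs_mul, abs_of_pos hs, Real.mul_rpow hs.le (abs_nonneg t)]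
    exact MRegion_map_affine hhom (fun v hv => ⟨nonempty_Gfun_ge hscore (hP2 v hv) hα.2,
      bddBelow_Gfun_ge hscore (hP2 v hv) hα.1⟩) A b

theorem stmt_6 {d : ℕ} (hd : 0 < d) (ρ ψ : ℝ → ℝ) (hρ : LossClass ρ)
    (hψ : IsLeftDeriv ρ ψ)
    (P : Measure (EuclideanSpace ℝ (Fin d))) [IsProbabilityMeasure P]
    (hP1 : ∀ u : EuclideanSpace ℝ (Fin d), ‖u‖ = 1 → ∀ c : ℝ, P {z | ⟪u, z⟫ = c} < 1)
    (hP2 : ∀ u : EuclideanSpace ℝ (Fin d), ‖u‖ = 1 → ∀ θ : ℝ,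
      Integrable (fun t => |ψ (t - θ)|) (dirProj P u))
    (α : ℝ) (hα : α ∈ Set.Ioo (0 : ℝ) 1) :
    Convex ℝ (MRegion ψ P α) ∧ IsCompact (MRegion ψ P α) ∧
    MRegion ψ P α ⊆ Csupport P ∧
    ((∃ r : ℝ, 1 ≤ r ∧ ρ = fun t : ℝ => |t| ^ r) →
      ∀ (A : EuclideanSpace ℝ (Fin d) ≃L[ℝ] EuclideanSpace ℝ (Fin d))
        (b : EuclideanSpace ℝ (Fin d)),
        MRegion ψ (P.map (fun z => A z + b)) α = (fun z => A z + b) '' MRegion ψ P α) :=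
  stmt_6_general ρ ψ hρ hψ P hP2 α hα
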